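/- arXiv:1212.4948 — 2 statements merged into one kernel-verified Lean document; each statement's English description precedes it below -/
import Mathlib

section
/- There exists a positive constant c_K (depending only on K and t) such that every principal divisor on the affine curve C is the divisor of a function ξ ∈ K satisfying ord_P(ξ) ≥ −deg(ξ)/[K : F_q(t)] − c_K for every infinite place P. Equivalently: for every nonzero f ∈ K there exists a unit u ∈ O_K^× such that ξ = uf satisfies the above bounds at all infinite places. -/
/-!
By the product formula the vector `(ord_p f + deg f / n)_p` lies on the hyperplane
`∑ d_p y_p = 0`, hence, by the Dirichlet unit theorem, in the `ℚ`-span of the valuation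
vectors of units. These vectors form a subgroup of `ℚ^P`, and a subgroup lies within bounded
distance of every point of its span: write the point in a finite basis taken from the subgroup
and round the coefficients down. Multiplying `f` by the resulting unit does not change its
degree and moves its valuation vector within that distance of the constant `-deg f / n`.
-/

open Finset

section Lattice

variable {𝕜 ι : Type*} [Field 𝕜] [LinearOrder 𝕜] [IsStrictOrderedRing 𝕜] [FloorRing 𝕜] [Fintype ι]

theorem AddSubgroup.exists_abs_sub_le_of_mem_span_finset (L : AddSubgroup (ι → 𝕜))
    {s : Finset (ι → 𝕜)} (hs : (s : Set (ι → 𝕜)) ⊆ L) {y : ι → 𝕜}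
    (hy : y ∈ Submodule.span 𝕜 (s : Set (ι → 𝕜))) :
    ∃ l ∈ L, ∀ i, |y i - l i| ≤ ∑ v ∈ s, ∑ j, |v j| := by
  obtain ⟨a, -, rfl⟩ := Submodule.mem_span_finset.mp hy
  refine ⟨∑ v ∈ s, ⌊a v⌋ • v, L.sum_mem fun v hv => L.zsmul_mem (hs hv) _, fun i => ?_⟩
  calc |(∑ v ∈ s, a v • v) i - (∑ v ∈ s, ⌊a v⌋ • v) i|
      = |∑ v ∈ s, Int.fract (a v) * v i| := by
        simp only [Finset.sum_apply, Pi.smul_apply, smul_eq_mul, zsmul_eq_mul, Pi.mul_apply,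
          Pi.intCast_apply, Int.fract, sub_mul, sum_sub_distrib]
    _ ≤ ∑ v ∈ s, |Int.fract (a v) * v i| := abs_sum_le_sum_abs _ _
    _ ≤ ∑ v ∈ s, ∑ j, |v j| := sum_le_sum fun v _ => by
        rw [abs_mul, abs_of_nonneg (Int.fract_nonneg _)]
        calc Int.fract (a v) * |v i| ≤ |v i| :=
              mul_le_of_le_one_left (abs_nonneg _) (Int.fract_lt_one _).le
          _ ≤ ∑ j, |v j| := single_le_sum (fun j _ => abs_nonneg (v j)) (mem_univ i)

theorem AddSubgroup.exists_abs_sub_le_of_mem_span (L : AddSubgroup (ι → 𝕜)) :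
    ∃ C : 𝕜, 0 < C ∧
      ∀ y ∈ Submodule.span 𝕜 (L : Set (ι → 𝕜)), ∃ l ∈ L, ∀ i, |y i - l i| ≤ C := by
  obtain ⟨s, hsL, -, hspan, -⟩ :=
    Submodule.exists_finset_span_eq_linearIndepOn 𝕜 (L : Set (ι → 𝕜))
  refine ⟨∑ v ∈ s, ∑ j, |v j| + 1, by positivity, fun y hy => ?_⟩
  obtain ⟨l, hl, hyl⟩ := L.exists_abs_sub_le_of_mem_span_finset hsL (hspan ▸ hy)
  exact ⟨l, hl, fun i => (hyl i).trans (le_add_of_nonneg_right zero_le_one)⟩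

end Lattice

theorem sum_mul_sub_weightedMean_eq_zero {ι 𝕜 : Type*} [Fintype ι] [Field 𝕜] (w x : ι → 𝕜)
    (hw : ∑ i, w i ≠ 0) : ∑ i, w i * (x i - (∑ j, w j * x j) / ∑ j, w j) = 0 := by
  simp only [mul_sub, sum_sub_distrib, ← sum_mul, mul_div_cancel₀ _ hw, sub_self]

theorem stmt1_general {K : Type*} [Field K] {P : Type*} [Fintype P]
    (d : P → ℕ)
    (n : ℕ) (hn : 0 < n) (hsum : (∑ p, d p) = n)
    (ord : Kˣ → (P → ℤ))             -- valuations at the infinite places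
    (hord : ∀ f g : Kˣ, ord (f * g) = ord f + ord g)
    (deg : Kˣ → ℤ)
    (hdeg : ∀ f : Kˣ, deg f = -∑ p, (d p : ℤ) * ord f p)
    (U : Subgroup Kˣ)                -- the unit group O_K^×
    (hUdeg : ∀ u ∈ U, (∑ p, (d p : ℤ) * ord u p) = 0)  -- units have degree-0 divisor at ∞
    -- Dirichlet: the valuation vectors of units span the hyperplane ∑ d·y = 0 over ℚ
    (hspan : ∀ y : P → ℚ, (∑ p, (d p : ℚ) * y p) = 0 →
      y ∈ Submodule.span ℚ ((fun u : U => fun p => ((ord u.1 p : ℤ) : ℚ)) '' Set.univ)) :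
    ∃ c : ℚ, 0 < c ∧ ∀ f : Kˣ, ∃ u ∈ U,
      ∀ p : P, ((ord (u * f) p : ℤ) : ℚ) ≥ -((deg (u * f) : ℤ) : ℚ) / (n : ℚ) - c := by
  let ordℚ : Additive Kˣ →+ (P → ℚ) :=
    ((Int.castAddHom ℚ).compLeft P).comp
      (AddMonoidHom.mk' (fun f => ord f.toMul) fun _ _ => hord _ _)
  obtain ⟨c, hc, hL⟩ := (U.toAddSubgroup.map ordℚ).exists_abs_sub_le_of_mem_span
  refine ⟨c, hc, fun f => ?_⟩
  have hdeg_mul : ∀ u ∈ U, deg (u * f) = deg f := fun u hu => by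
    simp only [hdeg, hord, Pi.add_apply, mul_add, sum_add_distrib, hUdeg u hu, zero_add]
  have hdegℚ : (deg f : ℚ) = -∑ p, (d p : ℚ) * ord f p := by rw [hdeg]; push_cast; rfl
  have hnℚ : ∑ p, (d p : ℚ) = n := by exact_mod_cast hsum
  set y : P → ℚ := fun p => -((ord f p : ℚ) + deg f / n)
  have hy : ∑ p, (d p : ℚ) * y p = 0 := by
    have := sum_mul_sub_weightedMean_eq_zero (fun p => (d p : ℚ)) (fun p => (ord f p : ℚ))
      (by rw [hnℚ]; exact_mod_cast hn.ne')
    simp only [y, hdegℚ, hnℚ, mul_neg, sum_neg_distrib, neg_div, ← sub_eq_add_neg] at this ⊢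
    rw [this, neg_zero]
  have hy_span : y ∈ Submodule.span ℚ (U.toAddSubgroup.map ordℚ : Set (P → ℚ)) := by
    refine Submodule.span_mono ?_ (hspan y hy)
    rintro _ ⟨u, -, rfl⟩
    exact ⟨Additive.ofMul u.1, u.2, rfl⟩
  obtain ⟨_, ⟨u, hu, rfl⟩, hyu⟩ := hL y hy_span
  refine ⟨u.toMul, hu, fun p => ?_⟩
  have hyu_p : -((ord f p : ℚ) + deg f / n) - ord u.toMul p ≤ c := (abs_le.mp (hyu p)).2
  rw [hdeg_mul u.toMul hu, hord, Pi.add_apply, Int.cast_add, neg_div]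
  linarith

theorem stmt1 {K : Type*} [Field K] {P : Type*} [Fintype P] [Nonempty P]
    (d : P → ℕ) (hd : ∀ p, 0 < d p)
    (n : ℕ) (hn : 0 < n) (hsum : (∑ p, d p) = n)
    (ord : Kˣ → (P → ℤ))             -- valuations at the infinite places
    (hord : ∀ f g : Kˣ, ord (f * g) = ord f + ord g)
    (deg : Kˣ → ℤ)
    (hdeg : ∀ f : Kˣ, deg f = -∑ p, (d p : ℤ) * ord f p)
    (U : Subgroup Kˣ)                -- the unit group O_K^×
    (hUdeg : ∀ u ∈ U, (∑ p, (d p : ℤ) * ord u p) = 0)  -- units have degree-0 divisor at ∞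
    -- Dirichlet: the valuation vectors of units span the hyperplane ∑ d·y = 0 over ℚ
    (hspan : ∀ y : P → ℚ, (∑ p, (d p : ℚ) * y p) = 0 →
      y ∈ Submodule.span ℚ ((fun u : U => fun p => ((ord u.1 p : ℤ) : ℚ)) '' Set.univ)) :
    ∃ c : ℚ, 0 < c ∧ ∀ f : Kˣ, ∃ u ∈ U,
      ∀ p : P, ((ord (u * f) p : ℤ) : ℚ) ≥ -((deg (u * f) : ℤ) : ℚ) / (n : ℚ) - c :=
  stmt1_general d n hn hsum ord hord deg hdeg U hUdeg hspan
end

section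
/- In the setting of the truncated von Mangoldt weight for the function field K: with ν_r(x) = (φ_K(W)·R·Res_{z=1}ζ_K(z)) / (c_φ·q^{deg W·[K:F_q(t)]}) · Λ_{K,R}^2((Wx+α)·L(D)^{−1}), the local factor computation holds: for the weight ω((𝔡_j)_{1≤j≤s}) counting solutions x ∈ (L(D)/L(D−𝔡))^m with 𝔡_j ≤ (Wψ_j(x)+b'_j)+D for mutually independent linear forms ψ_j, one has (a) ω is multiplicative over prime divisors (Chinese Remainder Theorem), (b) ω at a prime ℘ dividing W with nontrivial local divisor data vanishes, and (c) for ℘ ∤ W with exactly one 𝔡_j locally equal to ℘, ω equals 1/N℘, while ω ≤ 1/N℘^2 when ℘^2 divides the product of the local parts. -/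
/-!
Lifting `x` to `y : Fin m → R`, the conditions defining `ω` become `W ψ_j(y) + b'_j ∈ I_j`.
The Chinese Remainder Theorem identifies `(R/(A ⊓ B))^m` with `(R/A)^m × (R/B)^m` compatibly
with these conditions, which gives multiplicativity. If `W ∈ ℘`, the condition modulo `℘` reads
`α ∈ ℘`, so it has no solution. If `W ∉ ℘` and `k = R/℘` is finite, the conditions are affine
equations over `k` with coefficient vectors `W ψ_j mod ℘`; `r` linearly independent ones cut out
a fibre of a surjective linear map `k^m → k^r`, hence have exactly `|k|^(m-r)` solutions. This
is applied with `r = 1` when `℘` occurs once, and to two of the equations when it occurs twice.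
-/

open Finset

/-- The local density weight of the Goldston–Yıldırım computation:
`ω((𝔡_j)) = #{x mod lcm(𝔡) : 𝔡_j ∣ (W·ψ_j(x) + b'_j) for all j} / N(lcm 𝔡)^m`,
formulated with ideals `I j` of the coordinate ring in place of the divisors `𝔡_j`
(so `lcm` is the intersection `⨅ j, I j` and `N I = |R/I|`). -/
noncomputable def omegaGY {R : Type*} [CommRing R] (m s : ℕ)
    (ψ : Fin s → Fin m → R) (W : R) (b' : Fin s → R) (I : Fin s → Ideal R) : ℝ :=
  (Nat.card {x : Fin m → R ⧸ (⨅ j, I j) // ∀ j : Fin s,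
      Ideal.Quotient.factor (S := ⨅ j', I j') (T := I j) (iInf_le I j)
        ((∑ i, Ideal.Quotient.mk (⨅ j', I j') (W * ψ j i) * x i) +
          Ideal.Quotient.mk (⨅ j', I j') (b' j)) = 0} : ℝ) /
    ((Nat.card (R ⧸ (⨅ j, I j)) : ℝ)) ^ m

open Matrix

theorem AddMonoidHom.card_fiber_mul_card_of_surjective {G H : Type*} [AddGroup G] [AddGroup H]
    {f : G →+ H} (hf : Function.Surjective f) (h : H) :
    Nat.card (f ⁻¹' {h}) * Nat.card H = Nat.card G := by
  rw [Nat.card_congr (f.fiberEquivKerOfSurjective hf h),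
    AddSubgroup.card_eq_card_quotient_mul_card_addSubgroup f.ker,
    Nat.card_congr (QuotientAddGroup.quotientKerEquivOfSurjective f hf).toEquiv, mul_comm]

theorem LinearIndependent.card_solutions_mul_card {k ι n : Type*} [Field k] [Fintype ι]
    [Fintype n] {c : ι → n → k} (hc : LinearIndependent k c) (d : ι → k) :
    Nat.card {x : n → k // ∀ t, c t ⬝ᵥ x + d t = 0} * Nat.card (ι → k) = Nat.card (n → k) := by
  set M := Matrix.of c
  have hrange : LinearMap.range M.mulVecLin = ⊤ := by
    apply Submodule.eq_top_of_finrank_eq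
    rw [← Matrix.rank, LinearIndependent.rank_matrix (M := M) hc,
      Module.finrank_fintype_fun_eq_card]
  have hsol (x : n → k) : (∀ t, c t ⬝ᵥ x + d t = 0) ↔ M.mulVecLin x = -d := by
    simp only [funext_iff, Matrix.mulVecLin_apply, eq_neg_iff_add_eq_zero]
    rfl
  rw [Nat.card_congr (Equiv.subtypeEquivRight hsol)]
  exact M.mulVecLin.toAddMonoidHom.card_fiber_mul_card_of_surjective
    (LinearMap.range_eq_top.1 hrange) (-d)

theorem iInf_eq_of_forall_eq_top_or_eq {α ι : Type*} [CompleteLattice α] {f : ι → α} {a : α}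
    (hf : ∀ i, f i = ⊤ ∨ f i = a) {i₀ : ι} (hi₀ : f i₀ = a) : ⨅ i, f i = a :=
  le_antisymm (iInf_le_of_le i₀ hi₀.le)
    (le_iInf fun i => (hf i).elim (fun h => h ▸ le_top) (fun h => h.ge))

namespace Ideal

variable {R ι : Type*} [CommRing R] {A B C : Ideal R}

noncomputable def piQuotientInfEquiv (hAB : IsCoprime A B) :
    (ι → R ⧸ A ⊓ B) ≃ (ι → R ⧸ A) × (ι → R ⧸ B) :=
  (Equiv.piCongrRight fun _ => (quotientInfEquivQuotientProd A B hAB).toEquiv).trans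
    (Equiv.arrowProdEquivProdArrow _ _ _)

theorem piQuotientInfEquiv_mk (hAB : IsCoprime A B) (y : ι → R) :
    piQuotientInfEquiv hAB (Quotient.mk _ ∘ y) = (Quotient.mk A ∘ y, Quotient.mk B ∘ y) :=
  rfl

theorem card_pi_quotient_of_eq_inf (hAB : IsCoprime A B) (hC : C = A ⊓ B) :
    Nat.card (ι → R ⧸ C) = Nat.card (ι → R ⧸ A) * Nat.card (ι → R ⧸ B) := by
  subst hC
  rw [← Nat.card_prod, Nat.card_congr (piQuotientInfEquiv hAB)]

theorem card_subtype_pi_quotient_of_eq_inf (hAB : IsCoprime A B) (hC : C = A ⊓ B)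
    {P : (ι → R ⧸ C) → Prop} {p : (ι → R ⧸ A) → Prop} {q : (ι → R ⧸ B) → Prop}
    (hP : ∀ y : ι → R, P (Quotient.mk C ∘ y) ↔ p (Quotient.mk A ∘ y) ∧ q (Quotient.mk B ∘ y)) :
    Nat.card {x // P x} = Nat.card {x // p x} * Nat.card {x // q x} := by
  subst hC
  have hP' (x : ι → R ⧸ A ⊓ B) :
      P x ↔ p (piQuotientInfEquiv hAB x).1 ∧ q (piQuotientInfEquiv hAB x).2 := by
    obtain ⟨y, rfl⟩ := Quotient.mk_surjective.comp_left x
    rw [hP, piQuotientInfEquiv_mk]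
  rw [← Nat.card_prod]
  exact Nat.card_congr (((piQuotientInfEquiv hAB).subtypeEquiv hP').trans
    (Equiv.subtypeProdEquivProd))

end Ideal

section GoldstonYildirim

variable {R : Type*} [CommRing R] {m s : ℕ} (ψ : Fin s → Fin m → R) (W : R) (b' : Fin s → R)

def formCoeffs (A : Ideal R) (j : Fin s) : Fin m → R ⧸ A :=
  fun i => Ideal.Quotient.mk A (W * ψ j i)

def IsLocalSolution (I : Fin s → Ideal R) (x : Fin m → R ⧸ ⨅ j, I j) : Prop :=
  ∀ j, Ideal.Quotient.factor (iInf_le I j)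
    (formCoeffs ψ W (⨅ j, I j) j ⬝ᵥ x + Ideal.Quotient.mk _ (b' j)) = 0

theorem omegaGY_eq_card_div (I : Fin s → Ideal R) :
    omegaGY m s ψ W b' I =
      Nat.card {x // IsLocalSolution ψ W b' I x} / Nat.card (Fin m → R ⧸ ⨅ j, I j) := by
  rw [Nat.card_fun, Nat.card_fin, Nat.cast_pow]
  rfl

theorem formCoeffs_dotProduct_mk (A : Ideal R) (j : Fin s) (y : Fin m → R) (d : R) :
    formCoeffs ψ W A j ⬝ᵥ (Ideal.Quotient.mk A ∘ y) + Ideal.Quotient.mk A d =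
      Ideal.Quotient.mk A (∑ i, W * ψ j i * y i + d) := by
  simp [formCoeffs, dotProduct, map_sum]

variable {ψ W b'}

theorem isLocalSolution_mk_iff {I : Fin s → Ideal R} (y : Fin m → R) :
    IsLocalSolution ψ W b' I (Ideal.Quotient.mk _ ∘ y) ↔
      ∀ j, ∑ i, W * ψ j i * y i + b' j ∈ I j := by
  simp only [IsLocalSolution, formCoeffs_dotProduct_mk, Ideal.Quotient.factor_mk,
    Ideal.Quotient.eq_zero_iff_mem]

theorem omegaGY_inf_eq_mul {I I' : Fin s → Ideal R} (hII' : IsCoprime (⨅ j, I j) (⨅ j, I' j)) :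
    omegaGY m s ψ W b' (fun j => I j ⊓ I' j) = omegaGY m s ψ W b' I * omegaGY m s ψ W b' I' := by
  have hinf : ⨅ j, I j ⊓ I' j = (⨅ j, I j) ⊓ ⨅ j, I' j := iInf_inf_eq
  rw [omegaGY_eq_card_div, omegaGY_eq_card_div, omegaGY_eq_card_div,
    Ideal.card_pi_quotient_of_eq_inf hII' hinf,
    Ideal.card_subtype_pi_quotient_of_eq_inf hII' hinf (p := IsLocalSolution ψ W b' I)
      (q := IsLocalSolution ψ W b' I') fun y => by
      simp only [isLocalSolution_mk_iff, Submodule.mem_inf, forall_and],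
    Nat.cast_mul, Nat.cast_mul, mul_div_mul_comm]

theorem omegaGY_eq_zero_of_mem {I : Fin s → Ideal R} (j₀ : Fin s) (hW : W ∈ I j₀)
    (hb' : b' j₀ ∉ I j₀) : omegaGY m s ψ W b' I = 0 := by
  have : IsEmpty {x // IsLocalSolution ψ W b' I x} := by
    refine ⟨fun ⟨x, hx⟩ => hb' ?_⟩
    obtain ⟨y, rfl⟩ := Ideal.Quotient.mk_surjective.comp_left x
    have hsum : ∑ i, W * ψ j₀ i * y i ∈ I j₀ :=
      Ideal.sum_mem _ fun i _ => Ideal.mul_mem_right _ _ (Ideal.mul_mem_right _ _ hW)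
    exact (Ideal.add_mem_iff_right _ hsum).1 ((isLocalSolution_mk_iff y).1 hx j₀)
  rw [omegaGY_eq_card_div, Nat.card_of_isEmpty, Nat.cast_zero, zero_div]

theorem isLocalSolution_iff_of_forall_eq_top_or_eq {I : Fin s → Ideal R}
    (hI : ∀ j, I j = ⊤ ∨ I j = ⨅ j', I j') (x : Fin m → R ⧸ ⨅ j, I j) :
    IsLocalSolution ψ W b' I x ↔
      ∀ j, I j = ⨅ j', I j' → formCoeffs ψ W _ j ⬝ᵥ x + Ideal.Quotient.mk _ (b' j) = 0 := by
  obtain ⟨y, rfl⟩ := Ideal.Quotient.mk_surjective.comp_left x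
  simp only [isLocalSolution_mk_iff, formCoeffs_dotProduct_mk, Ideal.Quotient.eq_zero_iff_mem]
  refine forall_congr' fun j => ?_
  rcases hI j with h | h <;> rw [h]
  · exact iff_of_true Submodule.mem_top fun h' => h' ▸ Submodule.mem_top
  · exact (imp_iff_right rfl).symm

theorem formCoeffs_ne_zero {P : Ideal R} [P.IsPrime] (hW : W ∉ P) {j : Fin s}
    (hψ : ∃ i, ψ j i ∉ P) : formCoeffs ψ W P j ≠ 0 := fun h => by
  obtain ⟨i, hi⟩ := hψ
  have hWψ : W * ψ j i ∈ P := Ideal.Quotient.eq_zero_iff_mem.1 (congrFun h i)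
  exact (Ideal.IsPrime.mem_or_mem ‹_› hWψ).elim hW hi

theorem linearIndependent_formCoeffs_pair {P : Ideal R} [P.IsPrime] (hW : W ∉ P) {j j' : Fin s}
    (hψ : ∀ u v : R, (∀ i, u * ψ j i - v * ψ j' i ∈ P) → u ∈ P ∧ v ∈ P) :
    LinearIndependent (R ⧸ P) ![formCoeffs ψ W P j, formCoeffs ψ W P j'] := by
  rw [LinearIndependent.pair_iff]
  intro s t hst
  obtain ⟨u, rfl⟩ := Ideal.Quotient.mk_surjective s
  obtain ⟨v, rfl⟩ := Ideal.Quotient.mk_surjective t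
  obtain ⟨huW, hvW⟩ := hψ (u * W) (-(v * W)) fun i => by
    have hi := congrFun hst i
    simp only [formCoeffs, Pi.add_apply, Pi.smul_apply, smul_eq_mul, Pi.zero_apply, ← map_mul,
      ← map_add, Ideal.Quotient.eq_zero_iff_mem] at hi
    convert hi using 1
    ring
  simp only [Ideal.Quotient.eq_zero_iff_mem]
  exact ⟨(Ideal.IsPrime.mem_or_mem ‹_› huW).resolve_right hW,
    (Ideal.IsPrime.mem_or_mem ‹_› (P.neg_mem_iff.1 hvW)).resolve_right hW⟩

theorem omegaGY_eq_inv_card_of_unique {P : Ideal R} [P.IsMaximal] [Finite (R ⧸ P)]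
    {I : Fin s → Ideal R} (hI : ∀ j, I j = ⊤ ∨ I j = P) {j₀ : Fin s} (hj₀ : I j₀ = P)
    (huniq : ∀ j, I j = P → j = j₀) (hne : formCoeffs ψ W P j₀ ≠ 0) :
    omegaGY m s ψ W b' I = 1 / Nat.card (R ⧸ P) := by
  obtain rfl := iInf_eq_of_forall_eq_top_or_eq hI hj₀
  let := Ideal.Quotient.field (⨅ j, I j)
  have hsol (x : Fin m → R ⧸ ⨅ j, I j) : IsLocalSolution ψ W b' I x ↔
      ∀ _ : Unit, formCoeffs ψ W _ j₀ ⬝ᵥ x + Ideal.Quotient.mk _ (b' j₀) = 0 := by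
    rw [isLocalSolution_iff_of_forall_eq_top_or_eq hI]
    refine ⟨fun h _ => h j₀ hj₀, fun h j hj => ?_⟩
    obtain rfl := huniq j hj
    exact h ()
  have hind : LinearIndependent (R ⧸ ⨅ j, I j) fun _ : Unit => formCoeffs ψ W _ j₀ :=
    linearIndependent_unique_iff.2 hne
  have hcount := hind.card_solutions_mul_card fun _ => Ideal.Quotient.mk _ (b' j₀)
  rw [Nat.card_congr (Equiv.funUnique Unit _)] at hcount
  rw [omegaGY_eq_card_div, Nat.card_congr (Equiv.subtypeEquivRight hsol),
    div_eq_div_iff (Nat.cast_pos.2 Nat.card_pos).ne' (Nat.cast_pos.2 Nat.card_pos).ne', one_mul]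
  exact_mod_cast hcount

theorem omegaGY_le_inv_card_sq {P : Ideal R} [P.IsMaximal] [Finite (R ⧸ P)]
    {I : Fin s → Ideal R} (hI : ∀ j, I j = ⊤ ∨ I j = P) {j₀ j₁ : Fin s} (hj₀ : I j₀ = P)
    (hj₁ : I j₁ = P)
    (hind : LinearIndependent (R ⧸ P) ![formCoeffs ψ W P j₀, formCoeffs ψ W P j₁]) :
    omegaGY m s ψ W b' I ≤ 1 / Nat.card (R ⧸ P) ^ 2 := by
  obtain rfl := iInf_eq_of_forall_eq_top_or_eq hI hj₀
  let := Ideal.Quotient.field (⨅ j, I j)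
  have hsol (x : Fin m → R ⧸ ⨅ j, I j) (hx : IsLocalSolution ψ W b' I x) : ∀ t : Fin 2,
      ![formCoeffs ψ W _ j₀, formCoeffs ψ W _ j₁] t ⬝ᵥ x +
        ![Ideal.Quotient.mk _ (b' j₀), Ideal.Quotient.mk _ (b' j₁)] t = 0 := by
    rw [isLocalSolution_iff_of_forall_eq_top_or_eq hI] at hx
    exact Fin.forall_fin_two.2 ⟨hx j₀ hj₀, hx j₁ hj₁⟩
  have hcount := hind.card_solutions_mul_card
    ![Ideal.Quotient.mk _ (b' j₀), Ideal.Quotient.mk _ (b' j₁)]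
  have hle := Nat.card_le_card_of_injective _ (Subtype.impEmbedding _ _ hsol).injective
  rw [Nat.card_fun, Nat.card_fin] at hcount
  rw [omegaGY_eq_card_div, div_le_div_iff₀ (Nat.cast_pos.2 Nat.card_pos)
    (pow_pos (Nat.cast_pos.2 Nat.card_pos) 2), one_mul]
  exact_mod_cast hcount ▸ Nat.mul_le_mul_right _ hle

end GoldstonYildirim

theorem stmt13_general {R : Type*} [CommRing R]
    (hfin : ∀ I : Ideal R, I ≠ ⊥ → Finite (R ⧸ I))
    (m s : ℕ)
    (ψ : Fin s → Fin m → R) (W α : R)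
    (b : Fin s → R) (b' : Fin s → R) (hb' : ∀ j, b' j = W * b j + α) :
    -- (a) multiplicativity over prime divisors (CRT)
    (∀ I I' : Fin s → Ideal R, ((⨅ j, I j) ⊔ (⨅ j, I' j) = ⊤) →
      omegaGY m s ψ W b' (fun j => I j ⊓ I' j) =
        omegaGY m s ψ W b' I * omegaGY m s ψ W b' I') ∧
    -- (b) vanishing at primes dividing W with nontrivial local data
    (∀ ℘ : Ideal R, ℘.IsPrime → ℘ ≠ ⊥ → W ∈ ℘ → α ∉ ℘ →
      ∀ I : Fin s → Ideal R, (∀ j, I j = ⊤ ∨ I j = ℘) → (∃ j, I j = ℘) →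
        omegaGY m s ψ W b' I = 0) ∧
    -- (c) values at primes not dividing W (℘ sufficiently large)
    (∀ ℘ : Ideal R, ℘.IsPrime → ℘ ≠ ⊥ → W ∉ ℘ →
      (∀ j, ∃ i, ψ j i ∉ ℘) →
      (∀ j j', j ≠ j' → ∀ u v : R,
        (∀ i, u * ψ j i - v * ψ j' i ∈ ℘) → u ∈ ℘ ∧ v ∈ ℘) →
      ∀ I : Fin s → Ideal R, (∀ j, I j = ⊤ ∨ I j = ℘) →
        ((∃! j, I j = ℘) →
          omegaGY m s ψ W b' I = 1 / (Nat.card (R ⧸ ℘) : ℝ)) ∧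
        ((∃ j j', j ≠ j' ∧ I j = ℘ ∧ I j' = ℘) →
          omegaGY m s ψ W b' I ≤ 1 / (Nat.card (R ⧸ ℘) : ℝ) ^ 2)) := by
  refine ⟨fun I I' hII' => omegaGY_inf_eq_mul (Ideal.isCoprime_iff_sup_eq.2 hII'), ?_, ?_⟩
  · rintro ℘ - - hW hα I - ⟨j₀, hj₀⟩
    refine omegaGY_eq_zero_of_mem j₀ (hj₀ ▸ hW) ?_
    rw [hj₀, hb', Ideal.add_mem_iff_right ℘ (℘.mul_mem_right _ hW)]
    exact hα
  · intro ℘ h℘ h℘0 hW hψ hind I hI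
    have := hfin ℘ h℘0
    have : ℘.IsMaximal := Ideal.Quotient.maximal_of_isField ℘ (Finite.isField_of_domain _)
    exact ⟨fun ⟨j₀, hj₀, huniq⟩ =>
        omegaGY_eq_inv_card_of_unique hI hj₀ huniq (formCoeffs_ne_zero hW (hψ j₀)),
      fun ⟨j₀, j₁, hj₀₁, hj₀, hj₁⟩ =>
        omegaGY_le_inv_card_sq hI hj₀ hj₁ (linearIndependent_formCoeffs_pair hW (hind j₀ j₁ hj₀₁))⟩

theorem stmt13 {R : Type*} [CommRing R] [IsDomain R] [IsDedekindDomain R]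
    (hfin : ∀ I : Ideal R, I ≠ ⊥ → Finite (R ⧸ I))
    (m s : ℕ) (hm : 0 < m) (hs : 0 < s)
    (ψ : Fin s → Fin m → R) (W α : R) (hW : W ≠ 0)
    (b : Fin s → R) (b' : Fin s → R) (hb' : ∀ j, b' j = W * b j + α) :
    -- (a) multiplicativity over prime divisors (CRT)
    (∀ I I' : Fin s → Ideal R, ((⨅ j, I j) ⊔ (⨅ j, I' j) = ⊤) →
      omegaGY m s ψ W b' (fun j => I j ⊓ I' j) =
        omegaGY m s ψ W b' I * omegaGY m s ψ W b' I') ∧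
    -- (b) vanishing at primes dividing W with nontrivial local data
    (∀ ℘ : Ideal R, ℘.IsPrime → ℘ ≠ ⊥ → W ∈ ℘ → α ∉ ℘ →
      ∀ I : Fin s → Ideal R, (∀ j, I j = ⊤ ∨ I j = ℘) → (∃ j, I j = ℘) →
        omegaGY m s ψ W b' I = 0) ∧
    -- (c) values at primes not dividing W (℘ sufficiently large)
    (∀ ℘ : Ideal R, ℘.IsPrime → ℘ ≠ ⊥ → W ∉ ℘ →
      (∀ j, ∃ i, ψ j i ∉ ℘) →
      (∀ j j', j ≠ j' → ∀ u v : R,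
        (∀ i, u * ψ j i - v * ψ j' i ∈ ℘) → u ∈ ℘ ∧ v ∈ ℘) →
      ∀ I : Fin s → Ideal R, (∀ j, I j = ⊤ ∨ I j = ℘) →
        ((∃! j, I j = ℘) →
          omegaGY m s ψ W b' I = 1 / (Nat.card (R ⧸ ℘) : ℝ)) ∧
        ((∃ j j', j ≠ j' ∧ I j = ℘ ∧ I j' = ℘) →
          omegaGY m s ψ W b' I ≤ 1 / (Nat.card (R ⧸ ℘) : ℝ) ^ 2)) :=
  stmt13_general hfin m s ψ W α b b' hb'
end
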